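/- Let k be a field and H a k-bialgebra with comultiplication Δ(h) = Σ h₍₁₎⊗h₍₂₎. Then the k-linear map R : H⊗H → H⊗H defined by R(g⊗h) = Σ h₍₁₎g ⊗ h₍₂₎ is a solution of the Hopf equation (R¹²R²³ = R²³R¹³R¹²). -/

import Mathlib

open TensorProduct LinearMap

section HopfEq

variable (k V : Type*) [Field k] [AddCommGroup V] [Module k V]

/-- The flip map `τ : V ⊗ V → V ⊗ V`, `τ(v ⊗ w) = w ⊗ v`. -/
noncomputable def flipMap : V ⊗[k] V →ₗ[k] V ⊗[k] V :=
  (TensorProduct.comm k V V).toLinearMap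

variable {k V}

/-- `R¹² = R ⊗ I` as an endomorphism of `V ⊗ V ⊗ V`. -/
noncomputable def map12 (R : V ⊗[k] V →ₗ[k] V ⊗[k] V) :
    V ⊗[k] (V ⊗[k] V) →ₗ[k] V ⊗[k] (V ⊗[k] V) :=
  (TensorProduct.assoc k V V V).toLinearMap ∘ₗ R.rTensor V ∘ₗ
    (TensorProduct.assoc k V V V).symm.toLinearMap

/-- `R²³ = I ⊗ R` as an endomorphism of `V ⊗ V ⊗ V`. -/
noncomputable def map23 (R : V ⊗[k] V →ₗ[k] V ⊗[k] V) :
    V ⊗[k] (V ⊗[k] V) →ₗ[k] V ⊗[k] (V ⊗[k] V) :=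
  R.lTensor V

/-- `R¹³ = (I ⊗ τ)(R ⊗ I)(I ⊗ τ)` as an endomorphism of `V ⊗ V ⊗ V`. -/
noncomputable def map13 (R : V ⊗[k] V →ₗ[k] V ⊗[k] V) :
    V ⊗[k] (V ⊗[k] V) →ₗ[k] V ⊗[k] (V ⊗[k] V) :=
  (flipMap k V).lTensor V ∘ₗ map12 R ∘ₗ (flipMap k V).lTensor V

/-- `R` is a solution of the Hopf equation: `R¹²R²³ = R²³R¹³R¹²`. -/
def IsHopfSolution (R : V ⊗[k] V →ₗ[k] V ⊗[k] V) : Prop :=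
  map12 R ∘ₗ map23 R = map23 R ∘ₗ map13 R ∘ₗ map12 R

/-- `R` is a solution of the pentagonal equation: `R¹²R¹³R²³ = R²³R¹²`. -/
def IsPentagonSolution (R : V ⊗[k] V →ₗ[k] V ⊗[k] V) : Prop :=
  map12 R ∘ₗ map13 R ∘ₗ map23 R = map23 R ∘ₗ map12 R

end HopfEq

variable (k H : Type*) [Field k] [Ring H] [Bialgebra k H]

/-- Takesaki's operator `R : H ⊗ H → H ⊗ H`, `R(g ⊗ h) = Σ h₍₁₎g ⊗ h₍₂₎`. -/
noncomputable def takesakiMap : H ⊗[k] H →ₗ[k] H ⊗[k] H :=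
  LinearMap.rTensor H (LinearMap.mul' k H ∘ₗ (TensorProduct.comm k H H).toLinearMap) ∘ₗ
    (TensorProduct.assoc k H H H).symm.toLinearMap ∘ₗ
    LinearMap.lTensor H (Coalgebra.comul (R := k))


/-! In the algebra `H ⊗ H` Takesaki's operator reads `R(g ⊗ h) = Δ(h) (g ⊗ 1)`. Since `Δ` is
multiplicative, `R¹²` lets a left factor `Δ(l)` of its second leg through as `(Δ ⊗ id) Δ(l)`, so
`R¹²R²³(g ⊗ h ⊗ l) = ((Δ ⊗ id) Δ(l)) · R¹²(g ⊗ h ⊗ 1)`; a direct computation gives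
`R²³R¹³R¹²(g ⊗ h ⊗ l) = ((id ⊗ Δ) Δ(l)) · R¹²(g ⊗ h ⊗ 1)`, and coassociativity concludes. -/

open Coalgebra

lemma TensorProduct.assoc_mul {R A B C : Type*} [CommSemiring R] [Semiring A] [Semiring B]
    [Semiring C] [Algebra R A] [Algebra R B] [Algebra R C] (x y : A ⊗[R] B ⊗[R] C) :
    TensorProduct.assoc R A B C (x * y) =
      TensorProduct.assoc R A B C x * TensorProduct.assoc R A B C y :=
  map_mul (Algebra.TensorProduct.assoc R R R A B C) x y

lemma lTensor_comul_mul {R A B : Type*} [CommSemiring R] [Semiring A] [Algebra R A]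
    [Semiring B] [Bialgebra R B] (x y : A ⊗[R] B) :
    (comul (R := R)).lTensor A (x * y) =
      (comul (R := R)).lTensor A x * (comul (R := R)).lTensor A y :=
  map_mul (Algebra.TensorProduct.map (AlgHom.id R A) (Bialgebra.comulAlgHom R B)) x y

section HopfEq

variable {k V : Type*} [Field k] [AddCommGroup V] [Module k V] (R : V ⊗[k] V →ₗ[k] V ⊗[k] V)

lemma map12_tmul_tmul (u v w : V) :
    map12 R (u ⊗ₜ (v ⊗ₜ w)) = TensorProduct.assoc k V V V (R (u ⊗ₜ v) ⊗ₜ w) := rfl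

lemma map13_tmul_tmul (u v w : V) :
    map13 R (u ⊗ₜ (v ⊗ₜ w)) =
      (flipMap k V).lTensor V (TensorProduct.assoc k V V V (R (u ⊗ₜ w) ⊗ₜ v)) := rfl

end HopfEq

section Takesaki

variable {k H}

lemma takesakiMap_tmul (g h : H) : takesakiMap k H (g ⊗ₜ h) = comul h * (g ⊗ₜ 1) := by
  suffices ∀ y : H ⊗[k] H, (mul' k H ∘ₗ (TensorProduct.comm k H H).toLinearMap).rTensor H
      ((TensorProduct.assoc k H H H).symm (g ⊗ₜ y)) = y * (g ⊗ₜ 1) from this (comul h)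
  intro y
  induction y using TensorProduct.induction_on with
  | zero => simp
  | tmul a b => simp
  | add y z hy hz => simp [tmul_add, add_mul, hy, hz]

lemma map12_takesakiMap_tmul_mul (g : H) (y z : H ⊗[k] H) :
    map12 (takesakiMap k H) (g ⊗ₜ (y * z)) =
      TensorProduct.assoc k H H H ((comul (R := k)).rTensor H y) *
        map12 (takesakiMap k H) (g ⊗ₜ z) := by
  induction y using TensorProduct.induction_on with
  | zero => simp
  | add y₁ y₂ h₁ h₂ => simp only [add_mul, tmul_add, map_add, h₁, h₂]
  | tmul a b =>
    induction z using TensorProduct.induction_on with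
    | zero => simp
    | add z₁ z₂ h₁ h₂ => simp only [mul_add, tmul_add, map_add, h₁, h₂]
    | tmul c d =>
      rw [Algebra.TensorProduct.tmul_mul_tmul, map12_tmul_tmul, map12_tmul_tmul,
        takesakiMap_tmul, takesakiMap_tmul, ← TensorProduct.assoc_mul, rTensor_tmul,
        Algebra.TensorProduct.tmul_mul_tmul, Bialgebra.comul_mul, mul_assoc]

lemma map23_takesakiMap_lTensor_flipMap_assoc (y : H ⊗[k] H) (b : H) :
    map23 (takesakiMap k H) ((flipMap k H).lTensor H (TensorProduct.assoc k H H H (y ⊗ₜ b))) =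
      (comul (R := k)).lTensor H y * (1 ⊗ₜ (b ⊗ₜ 1)) := by
  induction y using TensorProduct.induction_on with
  | zero => simp
  | add y₁ y₂ h₁ h₂ => simp only [add_tmul, map_add, add_mul, h₁, h₂]
  | tmul c d =>
    rw [TensorProduct.assoc_tmul, lTensor_tmul, map23, lTensor_tmul, lTensor_tmul,
      Algebra.TensorProduct.tmul_mul_tmul, mul_one, flipMap, LinearEquiv.coe_coe,
      TensorProduct.comm_tmul, takesakiMap_tmul]

lemma map23_map13_takesakiMap_tmul (a b l : H) :
    map23 (takesakiMap k H) (map13 (takesakiMap k H) (a ⊗ₜ (b ⊗ₜ l))) =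
      (comul (R := k)).lTensor H (comul l) * (a ⊗ₜ (b ⊗ₜ 1)) := by
  rw [map13_tmul_tmul, takesakiMap_tmul, map23_takesakiMap_lTensor_flipMap_assoc,
    lTensor_comul_mul, mul_assoc, lTensor_tmul, Bialgebra.comul_one,
    Algebra.TensorProduct.tmul_mul_tmul, mul_one, one_mul]

lemma map23_map13_takesakiMap_assoc (x : H ⊗[k] H) (l : H) :
    map23 (takesakiMap k H) (map13 (takesakiMap k H) (TensorProduct.assoc k H H H (x ⊗ₜ l))) =
      (comul (R := k)).lTensor H (comul l) * TensorProduct.assoc k H H H (x ⊗ₜ 1) := by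
  induction x using TensorProduct.induction_on with
  | zero => simp
  | add x₁ x₂ h₁ h₂ => simp only [add_tmul, map_add, mul_add, h₁, h₂]
  | tmul a b => exact map23_map13_takesakiMap_tmul a b l

end Takesaki

theorem takesakiMap_isHopfSolution : IsHopfSolution (takesakiMap k H) := by
  refine TensorProduct.ext_threefold' fun g h l => ?_
  calc map12 (takesakiMap k H) (map23 (takesakiMap k H) (g ⊗ₜ (h ⊗ₜ l)))
      = map12 (takesakiMap k H) (g ⊗ₜ (comul l * (h ⊗ₜ 1))) := by
        rw [map23, lTensor_tmul, takesakiMap_tmul]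
    _ = TensorProduct.assoc k H H H ((comul (R := k)).rTensor H (comul l)) *
          map12 (takesakiMap k H) (g ⊗ₜ (h ⊗ₜ 1)) := map12_takesakiMap_tmul_mul g _ _
    _ = (comul (R := k)).lTensor H (comul l) *
          TensorProduct.assoc k H H H (takesakiMap k H (g ⊗ₜ h) ⊗ₜ 1) := by
        rw [coassoc_apply, map12_tmul_tmul]
    _ = map23 (takesakiMap k H) (map13 (takesakiMap k H)
          (map12 (takesakiMap k H) (g ⊗ₜ (h ⊗ₜ l)))) := by
        rw [map12_tmul_tmul, map23_map13_takesakiMap_assoc]
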